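/- Let H be a 3-graph with vertex partition V(H) = V1 ∪ V2 ∪ V3. Then N(S2, H) = N(S2, H ∩ K[V1,V2,V3]) + |BS2| + Σ_{i∈[3]} N(S2, H[Vi]) + (number of copies of S2 with no bad edge that are neither inside a single part nor entirely in H ∩ K[V1,V2,V3]) — in the special case where H is {K4^{3-}, C5^{3-}}-free so that every copy of S2 is induced and every copy of S2 not inside a part and not contained in the transversal part must contain a bad edge, one has the exact decomposition N(S2, H) = N(S2, K[V1,V2,V3]) - |MS2| + |BS2| + Σ_{i∈[3]} N(S2, H[Vi]). -/
import Mathlib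


open Finset

/-- The complete 3-partite 3-graph with parts `V1, V2, V3`. -/
def ktriples (V1 V2 V3 : Finset ℕ) : Finset (Finset ℕ) :=
  (V1 ×ˢ V2 ×ˢ V3).image fun p => {p.1, p.2.1, p.2.2}

/-- The copies of 𝕊₂ in a 3-graph `G`: unordered pairs of edges of `G`
spanning 4 vertices. -/
def s2copies (G : Finset (Finset ℕ)) : Finset (Finset (Finset ℕ)) :=
  G.powerset.filter fun P => P.card = 2 ∧ (P.sup id).card = 4

/-- An edge `e` is *bad* for the partition `V₁, V₂, V₃` if its intersection
pattern with the parts is `{0,1,2}`. -/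
def badEdge (V1 V2 V3 : Finset ℕ) (e : Finset ℕ) : Prop :=
  ({(e ∩ V1).card, (e ∩ V2).card, (e ∩ V3).card} : Multiset ℕ) = {0, 1, 2}

instance (V1 V2 V3 : Finset ℕ) (e : Finset ℕ) : Decidable (badEdge V1 V2 V3 e) := by
  unfold badEdge; infer_instance

/-- `H` contains a copy of the 3-graph `F` (as a subgraph). -/
def containsCopy (H F : Finset (Finset ℕ)) : Prop :=
  ∃ ψ : ℕ → ℕ, Set.InjOn ψ ↑(F.sup id) ∧ ∀ e ∈ F, e.image ψ ∈ H

/-- K₄³⁻. -/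
def k4minus : Finset (Finset ℕ) := {({0, 1, 2} : Finset ℕ), {0, 1, 3}, {0, 2, 3}}

/-- C₅³⁻. -/
def c5minus : Finset (Finset ℕ) :=
  {({0, 1, 2} : Finset ℕ), {1, 2, 3}, {2, 3, 4}, {3, 4, 0}}

open Finset

lemma mem_s2copies {G : Finset (Finset ℕ)} {P : Finset (Finset ℕ)} :
    P ∈ s2copies G ↔ P ⊆ G ∧ P.card = 2 ∧ (P.sup id).card = 4 := by
  simp [s2copies, mem_filter, mem_powerset, and_assoc]

lemma s2copies_mono {G G' : Finset (Finset ℕ)} (h : G ⊆ G') :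
    s2copies G ⊆ s2copies G' := by
  intro P hP
  rw [mem_s2copies] at hP ⊢
  exact ⟨hP.1.trans h, hP.2⟩

lemma card_parts {V1 V2 V3 : Finset ℕ}
    (h12 : Disjoint V1 V2) (h13 : Disjoint V1 V3) (h23 : Disjoint V2 V3)
    {e : Finset ℕ} (he : e ⊆ V1 ∪ V2 ∪ V3) :
    (e ∩ V1).card + (e ∩ V2).card + (e ∩ V3).card = e.card := by
  have h1 : Disjoint (e ∩ V1) (e ∩ V2) := h12.mono inter_subset_right inter_subset_right
  have h2 : Disjoint (e ∩ V1 ∪ e ∩ V2) (e ∩ V3) :=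
    disjoint_union_left.mpr ⟨h13.mono inter_subset_right inter_subset_right,
      h23.mono inter_subset_right inter_subset_right⟩
  have : e ∩ V1 ∪ e ∩ V2 ∪ e ∩ V3 = e := by
    rw [← inter_union_distrib_left, ← inter_union_distrib_left]
    exact inter_eq_left.mpr he
  rw [← card_union_of_disjoint h1, ← card_union_of_disjoint h2, this]

lemma ktriples_inter {V1 V2 V3 : Finset ℕ}
    (h12 : Disjoint V1 V2) (h13 : Disjoint V1 V3) (h23 : Disjoint V2 V3)
    {e : Finset ℕ} (he : e ∈ ktriples V1 V2 V3) :
    (e ∩ V1).card = 1 ∧ (e ∩ V2).card = 1 ∧ (e ∩ V3).card = 1 := by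
  simp only [ktriples, mem_image, mem_product] at he
  obtain ⟨⟨x, y, z⟩, ⟨hx, hy, hz⟩, rfl⟩ := he
  have hy1 : y ∉ V1 := disjoint_right.mp h12 hy
  have hz1 : z ∉ V1 := disjoint_right.mp h13 hz
  have hx2 : x ∉ V2 := disjoint_left.mp h12 hx
  have hz2 : z ∉ V2 := disjoint_right.mp h23 hz
  have hx3 : x ∉ V3 := disjoint_left.mp h13 hx
  have hy3 : y ∉ V3 := disjoint_left.mp h23 hy
  refine ⟨?_, ?_, ?_⟩
  · have : ({x, y, z} : Finset ℕ) ∩ V1 = {x} := by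
      ext a; simp only [mem_inter, mem_insert, mem_singleton]
      constructor
      · rintro ⟨rfl | rfl | rfl, h⟩ <;> tauto
      · rintro rfl; exact ⟨Or.inl rfl, hx⟩
    rw [this, card_singleton]
  · have : ({x, y, z} : Finset ℕ) ∩ V2 = {y} := by
      ext a; simp only [mem_inter, mem_insert, mem_singleton]
      constructor
      · rintro ⟨rfl | rfl | rfl, h⟩ <;> tauto
      · rintro rfl; exact ⟨Or.inr (Or.inl rfl), hy⟩
    rw [this, card_singleton]
  · have : ({x, y, z} : Finset ℕ) ∩ V3 = {z} := by
      ext a; simp only [mem_inter, mem_insert, mem_singleton]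
      constructor
      · rintro ⟨rfl | rfl | rfl, h⟩ <;> tauto
      · rintro rfl; exact ⟨Or.inr (Or.inr rfl), hz⟩
    rw [this, card_singleton]

lemma mem_ktriples_of_inter {V1 V2 V3 : Finset ℕ}
    (h12 : Disjoint V1 V2) (h13 : Disjoint V1 V3) (h23 : Disjoint V2 V3)
    {e : Finset ℕ} (hc : e.card = 3)
    (h1 : (e ∩ V1).card = 1) (h2 : (e ∩ V2).card = 1) (h3 : (e ∩ V3).card = 1) :
    e ∈ ktriples V1 V2 V3 := by
  obtain ⟨x, hx⟩ := card_eq_one.mp h1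
  obtain ⟨y, hy⟩ := card_eq_one.mp h2
  obtain ⟨z, hz⟩ := card_eq_one.mp h3
  have hxm : x ∈ e ∩ V1 := hx ▸ mem_singleton_self x
  have hym : y ∈ e ∩ V2 := hy ▸ mem_singleton_self y
  have hzm : z ∈ e ∩ V3 := hz ▸ mem_singleton_self z
  simp only [mem_inter] at hxm hym hzm
  have hxy : x ≠ y := fun h => disjoint_left.mp h12 hxm.2 (h ▸ hym.2)
  have hxz : x ≠ z := fun h => disjoint_left.mp h13 hxm.2 (h ▸ hzm.2)
  have hyz : y ≠ z := fun h => disjoint_left.mp h23 hym.2 (h ▸ hzm.2)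
  have hsub : ({x, y, z} : Finset ℕ) ⊆ e := by
    intro a ha
    simp only [mem_insert, mem_singleton] at ha
    rcases ha with rfl | rfl | rfl
    exacts [hxm.1, hym.1, hzm.1]
  have hcard : ({x, y, z} : Finset ℕ).card = 3 := by
    rw [card_insert_of_notMem (by simp [hxy, hxz]),
      card_insert_of_notMem (by simp [hyz]), card_singleton]
  have : e = {x, y, z} := (eq_of_subset_of_card_le hsub (by omega)).symm
  simp only [ktriples, mem_image, mem_product]
  exact ⟨⟨x, y, z⟩, ⟨hxm.2, hym.2, hzm.2⟩, this.symm⟩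

lemma tri_cases (a b c : ℕ) (h : a + b + c = 3)
    (hnb : ({a, b, c} : Multiset ℕ) ≠ {0, 1, 2}) :
    (a = 1 ∧ b = 1 ∧ c = 1) ∨ a = 3 ∨ b = 3 ∨ c = 3 := by
  have ha : a ≤ 3 := by omega
  have hb : b ≤ 3 := by omega
  have hc : c ≤ 3 := by omega
  interval_cases a <;> interval_cases b <;> interval_cases c <;> simp_all <;> first | omega | exact absurd (by decide) hnb

lemma subset_of_inter_card {e W : Finset ℕ} (hc : e.card = 3) (h : (e ∩ W).card = 3) :
    e ⊆ W := by
  have he : e ∩ W = e := eq_of_subset_of_card_le inter_subset_left (by omega)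
  exact he ▸ inter_subset_right

lemma classify {V1 V2 V3 : Finset ℕ}
    (h12 : Disjoint V1 V2) (h13 : Disjoint V1 V3) (h23 : Disjoint V2 V3)
    {e : Finset ℕ} (hc : e.card = 3) (hs : e ⊆ V1 ∪ V2 ∪ V3)
    (hnb : ¬ badEdge V1 V2 V3 e) :
    e ∈ ktriples V1 V2 V3 ∨ e ⊆ V1 ∨ e ⊆ V2 ∨ e ⊆ V3 := by
  have hsum := card_parts h12 h13 h23 hs
  rw [hc] at hsum
  unfold badEdge at hnb
  rcases tri_cases _ _ _ hsum hnb with ⟨h1, h2, h3⟩ | h1 | h2 | h3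
  · exact Or.inl (mem_ktriples_of_inter h12 h13 h23 hc h1 h2 h3)
  · exact Or.inr (Or.inl (subset_of_inter_card hc h1))
  · exact Or.inr (Or.inr (Or.inl (subset_of_inter_card hc h2)))
  · exact Or.inr (Or.inr (Or.inr (subset_of_inter_card hc h3)))

lemma notbad_of_ktriples {V1 V2 V3 : Finset ℕ}
    (h12 : Disjoint V1 V2) (h13 : Disjoint V1 V3) (h23 : Disjoint V2 V3)
    {e : Finset ℕ} (he : e ∈ ktriples V1 V2 V3) : ¬ badEdge V1 V2 V3 e := by
  obtain ⟨h1, h2, h3⟩ := ktriples_inter h12 h13 h23 he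
  unfold badEdge
  rw [h1, h2, h3]
  decide

lemma notbad_of_sub1 {V1 V2 V3 : Finset ℕ}
    (h12 : Disjoint V1 V2) (h13 : Disjoint V1 V3)
    {e : Finset ℕ} (hc : e.card = 3) (h : e ⊆ V1) : ¬ badEdge V1 V2 V3 e := by
  unfold badEdge
  rw [inter_eq_left.mpr h, hc, disjoint_iff_inter_eq_empty.mp (h12.mono h le_rfl),
    disjoint_iff_inter_eq_empty.mp (h13.mono h le_rfl), card_empty]
  decide

lemma notbad_of_sub2 {V1 V2 V3 : Finset ℕ}
    (h12 : Disjoint V1 V2) (h23 : Disjoint V2 V3)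
    {e : Finset ℕ} (hc : e.card = 3) (h : e ⊆ V2) : ¬ badEdge V1 V2 V3 e := by
  unfold badEdge
  rw [inter_eq_left.mpr h, hc, disjoint_iff_inter_eq_empty.mp (h12.symm.mono h le_rfl),
    disjoint_iff_inter_eq_empty.mp (h23.mono h le_rfl), card_empty]
  decide

lemma notbad_of_sub3 {V1 V2 V3 : Finset ℕ}
    (h13 : Disjoint V1 V3) (h23 : Disjoint V2 V3)
    {e : Finset ℕ} (hc : e.card = 3) (h : e ⊆ V3) : ¬ badEdge V1 V2 V3 e := by
  unfold badEdge
  rw [inter_eq_left.mpr h, hc, disjoint_iff_inter_eq_empty.mp (h13.symm.mono h le_rfl),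
    disjoint_iff_inter_eq_empty.mp (h23.symm.mono h le_rfl), card_empty]
  decide

lemma mixKW {e f W : Finset ℕ} (h1 : (e ∩ W).card = 1) (hf : f ⊆ W)
    (hint : (e ∩ f).card = 2) : False := by
  have := card_le_card (inter_subset_inter (le_refl e) hf)
  omega

lemma mixWW {e f W W' : Finset ℕ} (hd : Disjoint W W') (he : e ⊆ W) (hf : f ⊆ W')
    (hint : (e ∩ f).card = 2) : False := by
  rw [disjoint_iff_inter_eq_empty.mp (hd.mono he hf), card_empty] at hint
  omega

lemma pair_classify {V1 V2 V3 : Finset ℕ}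
    (h12 : Disjoint V1 V2) (h13 : Disjoint V1 V3) (h23 : Disjoint V2 V3)
    {e f : Finset ℕ} (hce : e.card = 3) (hcf : f.card = 3)
    (hse : e ⊆ V1 ∪ V2 ∪ V3) (hsf : f ⊆ V1 ∪ V2 ∪ V3)
    (hint : (e ∩ f).card = 2)
    (hne : ¬ badEdge V1 V2 V3 e) (hnf : ¬ badEdge V1 V2 V3 f) :
    (e ∈ ktriples V1 V2 V3 ∧ f ∈ ktriples V1 V2 V3) ∨
      (e ⊆ V1 ∧ f ⊆ V1) ∨ (e ⊆ V2 ∧ f ⊆ V2) ∨ (e ⊆ V3 ∧ f ⊆ V3) := by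
  have hint' : (f ∩ e).card = 2 := by rwa [inter_comm]
  rcases classify h12 h13 h23 hce hse hne with heK | he1 | he2 | he3 <;>
    rcases classify h12 h13 h23 hcf hsf hnf with hfK | hf1 | hf2 | hf3
  · exact Or.inl ⟨heK, hfK⟩
  · exact (mixKW (ktriples_inter h12 h13 h23 heK).1 hf1 hint).elim
  · exact (mixKW (ktriples_inter h12 h13 h23 heK).2.1 hf2 hint).elim
  · exact (mixKW (ktriples_inter h12 h13 h23 heK).2.2 hf3 hint).elim
  · exact (mixKW (ktriples_inter h12 h13 h23 hfK).1 he1 hint').elim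
  · exact Or.inr (Or.inl ⟨he1, hf1⟩)
  · exact (mixWW h12 he1 hf2 hint).elim
  · exact (mixWW h13 he1 hf3 hint).elim
  · exact (mixKW (ktriples_inter h12 h13 h23 hfK).2.1 he2 hint').elim
  · exact (mixWW h12.symm he2 hf1 hint).elim
  · exact Or.inr (Or.inr (Or.inl ⟨he2, hf2⟩))
  · exact (mixWW h23 he2 hf3 hint).elim
  · exact (mixKW (ktriples_inter h12 h13 h23 hfK).2.2 he3 hint').elim
  · exact (mixWW h13.symm he3 hf1 hint).elim
  · exact (mixWW h23.symm he3 hf2 hint).elim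
  · exact Or.inr (Or.inr (Or.inr ⟨he3, hf3⟩))

/-- Exact decomposition of the 𝕊₂-count for a `{K₄³⁻, C₅³⁻}`-free 3-graph `H`
with vertex partition `V₁ ∪ V₂ ∪ V₃`:
`N(𝕊₂,H) = N(𝕊₂,K[V₁,V₂,V₃]) - |M𝕊₂| + |B𝕊₂| + Σᵢ N(𝕊₂,H[Vᵢ])`, written
without subtraction as
`N(𝕊₂,H) + |M𝕊₂| = N(𝕊₂,K[V₁,V₂,V₃]) + |B𝕊₂| + Σᵢ N(𝕊₂,H[Vᵢ])`. -/
theorem s2_decomposition (V1 V2 V3 : Finset ℕ)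
    (h12 : Disjoint V1 V2) (h13 : Disjoint V1 V3) (h23 : Disjoint V2 V3)
    (H : Finset (Finset ℕ))
    (hH : ∀ e ∈ H, e.card = 3 ∧ e ⊆ V1 ∪ V2 ∪ V3)
    (hK4 : ¬ containsCopy H k4minus) (hC5 : ¬ containsCopy H c5minus) :
    (s2copies H).card +
        (s2copies (ktriples V1 V2 V3) \ s2copies (H ∩ ktriples V1 V2 V3)).card =
      (s2copies (ktriples V1 V2 V3)).card +
        ((s2copies H).filter fun P => ∃ e ∈ P, badEdge V1 V2 V3 e).card +
        ((s2copies (H.filter fun e => e ⊆ V1)).card +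
          (s2copies (H.filter fun e => e ⊆ V2)).card +
          (s2copies (H.filter fun e => e ⊆ V3)).card) := by
  classical
  -- split the copies of S2 in H into those with a bad edge and the rest
  have hsplit := card_filter_add_card_filter_not
    (s := s2copies H) (p := fun P => ∃ e ∈ P, badEdge V1 V2 V3 e)
  -- the bad-free copies are exactly transversal copies plus within-part copies
  have hrest : (s2copies H).filter (fun P => ¬ ∃ e ∈ P, badEdge V1 V2 V3 e) =
      s2copies (H ∩ ktriples V1 V2 V3) ∪
        (s2copies (H.filter fun e => e ⊆ V1) ∪
          (s2copies (H.filter fun e => e ⊆ V2) ∪ s2copies (H.filter fun e => e ⊆ V3))) := by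
    ext P
    constructor
    · intro hP
      rw [mem_filter] at hP
      obtain ⟨hPs, hPnb⟩ := hP
      rw [mem_s2copies] at hPs
      obtain ⟨hPH, hP2, hP4⟩ := hPs
      obtain ⟨e, f, hef, rfl⟩ := card_eq_two.mp hP2
      have he : e ∈ H := hPH (mem_insert_self _ _)
      have hf : f ∈ H := hPH (mem_insert_of_mem (mem_singleton_self _))
      have hsup : ({e, f} : Finset (Finset ℕ)).sup id = e ∪ f := by
        simp [sup_insert, sup_singleton]
      rw [hsup] at hP4
      have h6 := card_union_add_card_inter e f
      rw [hP4, (hH e he).1, (hH f hf).1] at h6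
      have hint : (e ∩ f).card = 2 := by omega
      have hne : ¬ badEdge V1 V2 V3 e := fun hb => hPnb ⟨e, mem_insert_self _ _, hb⟩
      have hnf : ¬ badEdge V1 V2 V3 f :=
        fun hb => hPnb ⟨f, mem_insert_of_mem (mem_singleton_self _), hb⟩
      rcases pair_classify h12 h13 h23 (hH e he).1 (hH f hf).1 (hH e he).2 (hH f hf).2
          hint hne hnf with ⟨heK, hfK⟩ | ⟨he1, hf1⟩ | ⟨he2, hf2⟩ | ⟨he3, hf3⟩
      · apply mem_union_left
        rw [mem_s2copies]
        refine ⟨?_, hP2, by rw [hsup]; exact hP4⟩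
        simp [insert_subset_iff, mem_inter, he, hf, heK, hfK]
      · apply mem_union_right; apply mem_union_left
        rw [mem_s2copies]
        refine ⟨?_, hP2, by rw [hsup]; exact hP4⟩
        simp [insert_subset_iff, mem_filter, he, hf, he1, hf1]
      · apply mem_union_right; apply mem_union_right; apply mem_union_left
        rw [mem_s2copies]
        refine ⟨?_, hP2, by rw [hsup]; exact hP4⟩
        simp [insert_subset_iff, mem_filter, he, hf, he2, hf2]
      · apply mem_union_right; apply mem_union_right; apply mem_union_right
        rw [mem_s2copies]
        refine ⟨?_, hP2, by rw [hsup]; exact hP4⟩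
        simp [insert_subset_iff, mem_filter, he, hf, he3, hf3]
    · intro hP
      rw [mem_union, mem_union, mem_union] at hP
      rw [mem_filter]
      rcases hP with hP | hP | hP | hP
      · rw [mem_s2copies] at hP
        refine ⟨mem_s2copies.mpr ⟨hP.1.trans inter_subset_left, hP.2⟩, ?_⟩
        rintro ⟨e, heP, hbe⟩
        have := hP.1 heP
        rw [mem_inter] at this
        exact notbad_of_ktriples h12 h13 h23 this.2 hbe
      · rw [mem_s2copies] at hP
        refine ⟨mem_s2copies.mpr ⟨hP.1.trans (filter_subset _ _), hP.2⟩, ?_⟩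
        rintro ⟨e, heP, hbe⟩
        have := hP.1 heP
        rw [mem_filter] at this
        exact notbad_of_sub1 h12 h13 (hH e this.1).1 this.2 hbe
      · rw [mem_s2copies] at hP
        refine ⟨mem_s2copies.mpr ⟨hP.1.trans (filter_subset _ _), hP.2⟩, ?_⟩
        rintro ⟨e, heP, hbe⟩
        have := hP.1 heP
        rw [mem_filter] at this
        exact notbad_of_sub2 h12 h23 (hH e this.1).1 this.2 hbe
      · rw [mem_s2copies] at hP
        refine ⟨mem_s2copies.mpr ⟨hP.1.trans (filter_subset _ _), hP.2⟩, ?_⟩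
        rintro ⟨e, heP, hbe⟩
        have := hP.1 heP
        rw [mem_filter] at this
        exact notbad_of_sub3 h13 h23 (hH e this.1).1 this.2 hbe
  -- disjointness of the pieces
  have hd23 : Disjoint (s2copies (H.filter fun e => e ⊆ V2))
      (s2copies (H.filter fun e => e ⊆ V3)) := by
    rw [disjoint_left]
    intro P hP hP'
    rw [mem_s2copies] at hP hP'
    obtain ⟨e, heP⟩ := card_pos.mp (by rw [hP.2.1]; norm_num)
    have h1 := hP.1 heP; have h2 := hP'.1 heP
    rw [mem_filter] at h1 h2
    have hsub : e ⊆ V2 ∩ V3 := subset_inter h1.2 h2.2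
    rw [disjoint_iff_inter_eq_empty.mp h23, subset_empty] at hsub
    have := (hH e h1.1).1
    rw [hsub, card_empty] at this
    omega
  have hd12 : Disjoint (s2copies (H.filter fun e => e ⊆ V1))
      (s2copies (H.filter fun e => e ⊆ V2) ∪ s2copies (H.filter fun e => e ⊆ V3)) := by
    rw [disjoint_left]
    intro P hP hP'
    rw [mem_s2copies] at hP
    obtain ⟨e, heP⟩ := card_pos.mp (by rw [hP.2.1]; norm_num)
    have h1 := hP.1 heP
    rw [mem_filter] at h1
    rcases mem_union.mp hP' with hP' | hP' <;> rw [mem_s2copies] at hP' <;>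
      [have h2 := hP'.1 heP; have h2 := hP'.1 heP] <;> rw [mem_filter] at h2
    · have hsub : e ⊆ V1 ∩ V2 := subset_inter h1.2 h2.2
      rw [disjoint_iff_inter_eq_empty.mp h12, subset_empty] at hsub
      have := (hH e h1.1).1
      rw [hsub, card_empty] at this
      omega
    · have hsub : e ⊆ V1 ∩ V3 := subset_inter h1.2 h2.2
      rw [disjoint_iff_inter_eq_empty.mp h13, subset_empty] at hsub
      have := (hH e h1.1).1
      rw [hsub, card_empty] at this
      omega
  have hdB : Disjoint (s2copies (H ∩ ktriples V1 V2 V3))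
      (s2copies (H.filter fun e => e ⊆ V1) ∪
        (s2copies (H.filter fun e => e ⊆ V2) ∪ s2copies (H.filter fun e => e ⊆ V3))) := by
    rw [disjoint_left]
    intro P hP hP'
    rw [mem_s2copies] at hP
    obtain ⟨e, heP⟩ := card_pos.mp (by rw [hP.2.1]; norm_num)
    have h1 := hP.1 heP
    rw [mem_inter] at h1
    have hK := ktriples_inter h12 h13 h23 h1.2
    have hc := (hH e h1.1).1
    rw [mem_union, mem_union] at hP'
    rcases hP' with hP' | hP' | hP' <;> rw [mem_s2copies] at hP' <;>
      [have h2 := hP'.1 heP; have h2 := hP'.1 heP; have h2 := hP'.1 heP] <;>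
      rw [mem_filter] at h2
    · have := hK.1
      rw [inter_eq_left.mpr h2.2, hc] at this
      omega
    · have := hK.2.1
      rw [inter_eq_left.mpr h2.2, hc] at this
      omega
    · have := hK.2.2
      rw [inter_eq_left.mpr h2.2, hc] at this
      omega
  have hcard : ((s2copies H).filter (fun P => ¬ ∃ e ∈ P, badEdge V1 V2 V3 e)).card =
      (s2copies (H ∩ ktriples V1 V2 V3)).card +
        ((s2copies (H.filter fun e => e ⊆ V1)).card +
          ((s2copies (H.filter fun e => e ⊆ V2)).card +
            (s2copies (H.filter fun e => e ⊆ V3)).card)) := by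
    rw [hrest, card_union_of_disjoint hdB, card_union_of_disjoint hd12,
      card_union_of_disjoint hd23]
  have hsubK : s2copies (H ∩ ktriples V1 V2 V3) ⊆ s2copies (ktriples V1 V2 V3) :=
    s2copies_mono inter_subset_right
  rw [card_sdiff_of_subset hsubK]
  have hle := card_le_card hsubK
  omega
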